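/- Fix integers n ≥ 1, q ≥ 2, and M ≥ 1. If (M+1)M/2 · (q/(q−1))^{n−1} · q^{−2ⁿ+n+1} < 1, then there exists a q-ary word of length M that avoids Zₙ; consequently f(n,q) > M. -/

import Mathlib

/-!
An instance of `Z_{n+1}` of length `L` is `A B A` with `A` an instance of `Zₙ` of some
length `a ≥ 2ⁿ - 1` and `B` arbitrary, so the proportion of words of length `L` that are
instances of `Z_{n+1}` is at most a bound on the corresponding proportions for `Zₙ` times
`∑_{a ≥ 2ⁿ-1} q^{-a}`.
This gives the bound `(q/(q-1))^{n-1} q^{-2ⁿ+n+1}` on that proportion, and since a word of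
length `M` has `(M+1)M/2` nonempty infixes, under the hypothesis fewer than `q^M` words of
length `M` encounter `Zₙ`.
Conversely, `f(n,q)` is finite: if every word of length `L` encounters `Z_{n-1}`, then among
enough consecutive blocks of length `L + 1` of a long word two contain the same instance `x` of
`Z_{n-1}` of length `≤ L`, and the gap between the two copies makes `x u x` an instance of `Zₙ`.
-/

/-- `W` is an instance of the pattern `V`: the image of `V` under a semigroup
homomorphism sending each letter to a nonempty word. -/
def IsInst {α β : Type} (V : List α) (W : List β) : Prop :=
  ∃ φ : α → List β, (∀ a ∈ V, φ a ≠ []) ∧ W = (V.map φ).flatten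

/-- `U` encounters `V`: some contiguous subword (infix) of `U` is an instance of `V`. -/
def Encounters {α β : Type} (U : List β) (V : List α) : Prop :=
  ∃ W : List β, W <:+: U ∧ IsInst V W

/-- `U` avoids `V`: `U` does not encounter `V`. -/
def Avoids {α β : Type} (U : List β) (V : List α) : Prop :=
  ¬ Encounters U V

/-- The Zimin words over the alphabet ℕ: `Z₀ = ε`, `Z_{n+1} = Zₙ · n · Zₙ`. -/
def Zimin : ℕ → List ℕ
  | 0 => []
  | n + 1 => Zimin n ++ n :: Zimin n

/-- `zimf n q` is the smallest `M` such that every `q`-ary word of length `M`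
encounters the Zimin word `Zₙ`. -/
noncomputable def zimf (n q : ℕ) : ℕ :=
  sInf {M : ℕ | ∀ W : List (Fin q), W.length = M → Encounters W (Zimin n)}

/-- `ZC n q M` is the set of `q`-ary words of length `M` that are instances of `Zₙ`. -/
def ZC (n q M : ℕ) : Set (List (Fin q)) :=
  {W | W.length = M ∧ IsInst (Zimin n) W}

open Finset

lemma lt_of_mem_zimin {n a : ℕ} (h : a ∈ Zimin n) : a < n := by
  induction n with
  | zero => simp [Zimin] at h
  | succ n ih =>
    simp only [Zimin, List.mem_append, List.mem_cons] at h
    rcases h with h | rfl | h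
    · exact Nat.lt_succ_of_lt (ih h)
    · exact Nat.lt_succ_self _
    · exact Nat.lt_succ_of_lt (ih h)

lemma length_zimin (n : ℕ) : (Zimin n).length = 2 ^ n - 1 := by
  induction n with
  | zero => rfl
  | succ n ih =>
    simp only [Zimin, List.length_append, List.length_cons, ih, pow_succ]
    have := n.one_le_two_pow
    omega

lemma zimin_ne_nil {n : ℕ} (hn : 1 ≤ n) : Zimin n ≠ [] := by
  have := Nat.one_lt_two_pow_iff.mpr (Nat.one_le_iff_ne_zero.mp hn)
  rw [← List.length_pos_iff, length_zimin]
  omega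

lemma IsInst.length_le {α β : Type} {V : List α} {W : List β} (h : IsInst V W) :
    V.length ≤ W.length := by
  obtain ⟨φ, hφ, rfl⟩ := h
  induction V with
  | nil => simp
  | cons a V ih =>
    have ha : 0 < (φ a).length := List.length_pos_iff.mpr (hφ a List.mem_cons_self)
    have hV := ih fun b hb => hφ b (List.mem_cons_of_mem a hb)
    simp only [List.map_cons, List.flatten_cons, List.length_append, List.length_cons]
    omega

lemma isInst_zimin_succ {β : Type} {n : ℕ} {W : List β} :
    IsInst (Zimin (n + 1)) W ↔
      ∃ A B : List β, IsInst (Zimin n) A ∧ B ≠ [] ∧ W = A ++ B ++ A := by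
  constructor
  · rintro ⟨φ, hφ, rfl⟩
    exact ⟨((Zimin n).map φ).flatten, φ n, ⟨φ, fun a ha => hφ a (by simp [Zimin, ha]), rfl⟩,
      hφ n (by simp [Zimin]), by simp [Zimin]⟩
  · rintro ⟨A, B, ⟨ψ, hψ, rfl⟩, hB, rfl⟩
    have hfresh : ∀ a ∈ Zimin n, Function.update ψ n B a = ψ a :=
      fun a ha => Function.update_of_ne (lt_of_mem_zimin ha).ne _ _
    refine ⟨Function.update ψ n B, ?_, by simp [Zimin, List.map_congr_left hfresh]⟩
    simp only [Zimin, List.mem_append, List.mem_cons]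
    rintro a (ha | rfl | ha)
    · rw [hfresh a ha]; exact hψ a ha
    · rwa [Function.update_self]
    · rw [hfresh a ha]; exact hψ a ha

lemma Encounters.mono {α β : Type} {U U' : List β} {V : List α} (h : Encounters U V)
    (hU : U <:+: U') : Encounters U' V :=
  let ⟨W, hW, hI⟩ := h
  ⟨W, hW.trans hU, hI⟩

section Words

variable {α : Type} [Fintype α]

variable (α) in
def words (L : ℕ) : Finset (List α) :=
  univ.map ⟨List.ofFn (n := L), List.ofFn_injective⟩

lemma mem_words {L : ℕ} {W : List α} : W ∈ words α L ↔ W.length = L := by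
  simp only [words, mem_map, mem_univ, true_and, Function.Embedding.coeFn_mk]
  constructor
  · rintro ⟨f, rfl⟩
    exact List.length_ofFn
  · rintro rfl
    exact ⟨W.get, List.ofFn_get W⟩

lemma card_words (L : ℕ) : #(words α L) = Fintype.card α ^ L := by
  simp [words]

end Words

section Counting

variable {α : Type} [Fintype α]

variable (α) in
open Classical in
noncomputable def instances {β : Type} (V : List β) (L : ℕ) : Finset (List α) :=
  (words α L).filter (IsInst V)

lemma mem_instances {β : Type} {V : List β} {L : ℕ} {W : List α} :
    W ∈ instances α V L ↔ W.length = L ∧ IsInst V W := by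
  simp [instances, mem_words]

lemma card_instances_le {β : Type} (V : List β) (L : ℕ) :
    #(instances α V L) ≤ Fintype.card α ^ L := by
  classical
  exact (card_filter_le _ _).trans (card_words L).le

lemma card_instances_zimin_succ_le (n L : ℕ) :
    #(instances α (Zimin (n + 1)) L) ≤
      ∑ a ∈ (Ico (2 ^ n - 1) L).filter (fun a => 2 * a < L),
        #(instances α (Zimin n) a) * Fintype.card α ^ (L - 2 * a) := by
  classical
  calc #(instances α (Zimin (n + 1)) L)
      ≤ #(((Ico (2 ^ n - 1) L).filter (fun a => 2 * a < L)).biUnion fun a =>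
          (instances α (Zimin n) a ×ˢ words α (L - 2 * a)).image
            fun p => p.1 ++ p.2 ++ p.1) := by
        refine card_le_card fun W hW => ?_
        obtain ⟨rfl, hI⟩ := mem_instances.mp hW
        obtain ⟨A, B, hA, hB, rfl⟩ := isInst_zimin_succ.mp hI
        have hAlen := length_zimin n ▸ hA.length_le
        have hBlen := List.length_pos_iff.mpr hB
        simp only [mem_biUnion, mem_filter, mem_Ico, mem_image, mem_product, mem_instances,
          mem_words, Prod.exists, List.length_append]
        exact ⟨A.length, ⟨⟨hAlen, by omega⟩, by omega⟩, A, B, ⟨⟨rfl, hA⟩, by omega⟩, rfl⟩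
    _ ≤ _ := card_biUnion_le
    _ ≤ _ := sum_le_sum fun a _ => card_image_le.trans (by rw [card_product, card_words])

end Counting

noncomputable def ziminBound (q : ℝ) (n : ℕ) : ℝ :=
  (q / (q - 1)) ^ (n - 1) * q ^ (-(2 ^ n : ℤ) + n + 1)

lemma ziminBound_pos {q : ℝ} (hq : 1 < q) (n : ℕ) : 0 < ziminBound q n := by
  have : 0 < q - 1 := by linarith
  unfold ziminBound
  positivity

lemma ziminBound_succ {q : ℝ} (hq : 1 < q) {n : ℕ} (hn : 1 ≤ n) :
    ziminBound q (n + 1) = ziminBound q n * q⁻¹ ^ (2 ^ n - 1) / (1 - q⁻¹) := by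
  have hq0 : q ≠ 0 := by positivity
  have hq1 : q - 1 ≠ 0 := by linarith
  have hexp : (-(2 ^ (n + 1) : ℤ) + (n + 1 : ℕ) + 1) =
      (-(2 ^ n : ℤ) + n + 1) + (-((2 ^ n - 1 : ℕ) : ℤ)) := by
    push_cast [n.one_le_two_pow]
    ring
  obtain ⟨m, rfl⟩ : ∃ m, n = m + 1 := ⟨n - 1, by omega⟩
  have hD : q / (q - 1) = (1 - q⁻¹)⁻¹ := by field_simp
  rw [ziminBound, ziminBound, hexp, zpow_add₀ hq0, zpow_neg, zpow_natCast, ← inv_pow, hD]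
  simp only [Nat.add_sub_cancel, pow_succ]
  ring

section Density

variable {α : Type} [Fintype α] [Nontrivial α]

theorem card_instances_zimin_le {n : ℕ} (hn : 1 ≤ n) (L : ℕ) :
    (#(instances α (Zimin n) L) : ℝ) ≤
      ziminBound (Fintype.card α) n * (Fintype.card α : ℝ) ^ L := by
  set q := Fintype.card α
  have hq : (1 : ℝ) < q := by exact_mod_cast Fintype.one_lt_card
  induction n, hn using Nat.le_induction generalizing L with
  | base => simpa [ziminBound] using (Nat.cast_le (α := ℝ)).mpr (card_instances_le (Zimin 1) L)
  | succ n hn ih =>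
    set S := (Ico (2 ^ n - 1) L).filter (fun a => 2 * a < L)
    have hgeom : ∑ a ∈ S, (q : ℝ)⁻¹ ^ a ≤ (q : ℝ)⁻¹ ^ (2 ^ n - 1) / (1 - (q : ℝ)⁻¹) :=
      (sum_le_sum_of_subset_of_nonneg (filter_subset _ _) fun _ _ _ => by positivity).trans
        (geom_sum_Ico_le_of_lt_one (by positivity) (inv_lt_one_of_one_lt₀ hq))
    calc (#(instances α (Zimin (n + 1)) L) : ℝ)
        ≤ ∑ a ∈ S, (#(instances α (Zimin n) a) : ℝ) * (q : ℝ) ^ (L - 2 * a) := by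
          exact_mod_cast card_instances_zimin_succ_le n L
      _ ≤ ∑ a ∈ S, ziminBound q n * (q : ℝ) ^ L * (q : ℝ)⁻¹ ^ a := by
          refine sum_le_sum fun a ha => ?_
          have h2a : 2 * a ≤ L := (mem_filter.mp ha).2.le
          calc (#(instances α (Zimin n) a) : ℝ) * (q : ℝ) ^ (L - 2 * a)
              ≤ ziminBound q n * (q : ℝ) ^ a * (q : ℝ) ^ (L - 2 * a) := by gcongr; exact ih a
            _ = ziminBound q n * (q : ℝ) ^ L * (q : ℝ)⁻¹ ^ a := by
              rw [pow_sub₀ _ (by positivity) h2a, pow_mul', inv_pow]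
              field_simp
      _ = ziminBound q n * (q : ℝ) ^ L * ∑ a ∈ S, (q : ℝ)⁻¹ ^ a := by rw [mul_sum]
      _ ≤ ziminBound q n * (q : ℝ) ^ L * ((q : ℝ)⁻¹ ^ (2 ^ n - 1) / (1 - (q : ℝ)⁻¹)) := by
          have := ziminBound_pos hq n
          gcongr
      _ = ziminBound q (n + 1) * (q : ℝ) ^ L := by
          rw [ziminBound_succ hq hn]
          ring

end Density

section FirstMoment

variable {α : Type} [Fintype α]

variable (α) in
/-- The number of pairs `(W, [i, e))` of a word `W` of length `M` and a nonempty interval of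
positions such that the infix of `W` on `[i, e)` is an instance of `V`. -/
noncomputable def numInstanceOccurrences {β : Type} (V : List β) (M : ℕ) : ℕ :=
  ∑ e ∈ range (M + 1), ∑ i ∈ range e,
    Fintype.card α ^ i * #(instances α V (e - i)) * Fintype.card α ^ (M - e)

lemma exists_avoids_of_numInstanceOccurrences_lt {β : Type} {V : List β} (hV : V ≠ []) {M : ℕ}
    (h : numInstanceOccurrences α V M < Fintype.card α ^ M) :
    ∃ W : List α, W.length = M ∧ Avoids W V := by
  classical
  by_contra! hall
  refine h.not_ge ?_
  calc Fintype.card α ^ M = #(words α M) := (card_words M).symm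
    _ ≤ #((range (M + 1)).biUnion fun e => (range e).biUnion fun i =>
          ((words α i ×ˢ instances α V (e - i)) ×ˢ words α (M - e)).image
            fun p => p.1.1 ++ p.1.2 ++ p.2) := by
        refine card_le_card fun W hW => ?_
        obtain ⟨U, ⟨s, t, rfl⟩, hU⟩ := not_not.mp (hall W (mem_words.mp hW))
        have hUlen : 0 < U.length := (List.length_pos_iff.mpr hV).trans_le hU.length_le
        have hlen := mem_words.mp hW
        simp only [List.length_append] at hlen
        simp only [mem_biUnion, mem_range, mem_image, mem_product, mem_words, mem_instances,
          Prod.exists]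
        exact ⟨s.length + U.length, by omega, s.length, by omega, s, U, t,
          ⟨⟨rfl, by simp, hU⟩, by omega⟩, rfl⟩
    _ ≤ ∑ e ∈ range (M + 1), ∑ i ∈ range e,
          #(((words α i ×ˢ instances α V (e - i)) ×ˢ words α (M - e)).image
            fun p => p.1.1 ++ p.1.2 ++ p.2) :=
        card_biUnion_le.trans (sum_le_sum fun _ _ => card_biUnion_le)
    _ ≤ numInstanceOccurrences α V M := by
        rw [numInstanceOccurrences]
        gcongr
        exact card_image_le.trans (by rw [card_product, card_product, card_words, card_words])

lemma sum_range_natCast_id (M : ℕ) : ∑ e ∈ range (M + 1), (e : ℝ) = ((M : ℝ) + 1) * M / 2 := by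
  induction M with
  | zero => simp
  | succ M ih =>
    rw [sum_range_succ, ih]
    push_cast
    ring

lemma numInstanceOccurrences_zimin_le [Nontrivial α] {n : ℕ} (hn : 1 ≤ n) (M : ℕ) :
    (numInstanceOccurrences α (Zimin n) M : ℝ) ≤
      ((M : ℝ) + 1) * M / 2 * ziminBound (Fintype.card α) n * (Fintype.card α : ℝ) ^ M := by
  set q := Fintype.card α
  rw [numInstanceOccurrences]
  push_cast
  calc _ ≤ ∑ e ∈ range (M + 1), ∑ i ∈ range e, ziminBound q n * (q : ℝ) ^ M := by
        refine sum_le_sum fun e he => sum_le_sum fun i hi => ?_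
        have hM : i + (e - i) + (M - e) = M := by
          rw [mem_range] at he hi
          omega
        calc (q : ℝ) ^ i * #(instances α (Zimin n) (e - i)) * (q : ℝ) ^ (M - e)
            ≤ (q : ℝ) ^ i * (ziminBound q n * (q : ℝ) ^ (e - i)) * (q : ℝ) ^ (M - e) := by
              gcongr
              exact card_instances_zimin_le hn _
          _ = ziminBound q n * (q : ℝ) ^ (i + (e - i) + (M - e)) := by ring
          _ = ziminBound q n * (q : ℝ) ^ M := by rw [hM]
    _ = (∑ e ∈ range (M + 1), (e : ℝ)) * (ziminBound q n * (q : ℝ) ^ M) := by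
        simp only [sum_const, card_range, nsmul_eq_mul, sum_mul]
    _ = _ := by
        rw [sum_range_natCast_id]
        ring

end FirstMoment

lemma exists_sandwich_infix_of_infix {α : Type} {x V W : List α} (c : α) (hV : x <:+: V)
    (hW : x <:+: W) : ∃ u, u ≠ [] ∧ x ++ u ++ x <:+: V ++ c :: W := by
  obtain ⟨s, t, rfl⟩ := hV
  obtain ⟨s', t', rfl⟩ := hW
  exact ⟨t ++ c :: s', by simp, s, t', by simp⟩

lemma exists_sandwich_infix_or_many_short_infixes {α : Type} (P : List α → Prop) {L : ℕ}
    (hP : ∀ W : List α, L ≤ W.length → ∃ x, x <:+: W ∧ P x) (k : ℕ) (W : List α)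
    (hW : k * (L + 1) ≤ W.length) :
    (∃ x u, P x ∧ u ≠ [] ∧ x ++ u ++ x <:+: W) ∨
      ∃ S : Finset (List α), k ≤ #S ∧ ∀ x ∈ S, x.length ≤ L ∧ x <:+: W := by
  classical
  induction k generalizing W with
  | zero => exact Or.inr ⟨∅, le_rfl, by simp⟩
  | succ k ih =>
    rw [Nat.succ_mul] at hW
    obtain ⟨V, c, W', rfl, hV⟩ : ∃ V c W', W = V ++ c :: W' ∧ V.length = L :=
      ⟨W.take L, W[L], W.drop (L + 1), by
        rw [← List.drop_eq_getElem_cons (by omega), List.take_append_drop], by simp; omega⟩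
    have hW' : W' <:+: V ++ c :: W' := (List.suffix_append (V ++ [c]) W').isInfix.trans (by simp)
    obtain ⟨x, hxV, hx⟩ := hP V hV.ge
    rcases ih W' (by simp at hW; omega) with ⟨y, u, hy, hu, hyuy⟩ | ⟨S, hS, hSW'⟩
    · exact Or.inl ⟨y, u, hy, hu, hyuy.trans hW'⟩
    by_cases hxS : x ∈ S
    · obtain ⟨u, hu, hxux⟩ := exists_sandwich_infix_of_infix c hxV (hSW' x hxS).2
      exact Or.inl ⟨x, u, hx, hu, hxux⟩
    · refine Or.inr ⟨insert x S, by rw [card_insert_of_notMem hxS]; omega, ?_⟩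
      simp only [mem_insert, forall_eq_or_imp]
      exact ⟨⟨hV ▸ hxV.length_le, hxV.trans (List.prefix_append V _).isInfix⟩,
        fun y hy => ⟨(hSW' y hy).1, (hSW' y hy).2.trans hW'⟩⟩

theorem exists_forall_sandwich_infix {α : Type} [Fintype α] (P : List α → Prop) (L : ℕ)
    (hP : ∀ W : List α, L ≤ W.length → ∃ x, x <:+: W ∧ P x) :
    ∃ N, ∀ W : List α, N ≤ W.length → ∃ x u, P x ∧ u ≠ [] ∧ x ++ u ++ x <:+: W := by
  classical
  let shortWords := (range (L + 1)).biUnion (words α)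
  refine ⟨(#shortWords + 1) * (L + 1), fun W hW =>
    (exists_sandwich_infix_or_many_short_infixes P hP _ W hW).resolve_right ?_⟩
  rintro ⟨S, hS, hSW⟩
  have hS_short : S ⊆ shortWords := fun x hx =>
    mem_biUnion.mpr ⟨x.length, mem_range.mpr (Nat.lt_succ_of_le (hSW x hx).1), mem_words.mpr rfl⟩
  have := card_le_card hS_short
  omega

theorem exists_forall_encounters_zimin (α : Type) [Fintype α] (n : ℕ) :
    ∃ N, ∀ W : List α, N ≤ W.length → Encounters W (Zimin n) := by
  induction n with
  | zero => exact ⟨0, fun W _ => ⟨[], List.nil_infix, fun _ => [], by simp [Zimin], rfl⟩⟩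
  | succ n ih =>
    obtain ⟨L, hL⟩ := ih
    obtain ⟨N, hN⟩ := exists_forall_sandwich_infix (IsInst (Zimin n)) L hL
    refine ⟨N, fun W hW => ?_⟩
    obtain ⟨x, u, hx, hu, hxux⟩ := hN W hW
    exact ⟨_, hxux, isInst_zimin_succ.mpr ⟨x, u, hx, hu, rfl⟩⟩

lemma lt_zimf_of_avoids {n q : ℕ} {W : List (Fin q)} (hW : Avoids W (Zimin n)) :
    W.length < zimf n q := by
  obtain ⟨N, hN⟩ := exists_forall_encounters_zimin (Fin q) n
  have hzimf : ∀ U : List (Fin q), U.length = zimf n q → Encounters U (Zimin n) :=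
    Nat.sInf_mem (s := {M | ∀ U : List (Fin q), U.length = M → Encounters U (Zimin n)})
      ⟨N, fun U hU => hN U hU.ge⟩
  by_contra! hle
  exact hW ((hzimf (W.take (zimf n q)) (by simpa using hle)).mono (W.take_prefix _).isInfix)

theorem exists_avoiding_word_general (n q M : ℕ) (hn : 1 ≤ n) (hq : 2 ≤ q)
    (h : ((M : ℝ) + 1) * (M : ℝ) / 2 *
        ((q : ℝ) / ((q : ℝ) - 1)) ^ (n - 1) * (q : ℝ) ^ (-(2 ^ n : ℤ) + n + 1) < 1) :
    (∃ W : List (Fin q), W.length = M ∧ Avoids W (Zimin n)) ∧ M < zimf n q := by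
  have : Nontrivial (Fin q) := Fin.nontrivial_iff_two_le.mpr hq
  have hbound := numInstanceOccurrences_zimin_le (α := Fin q) hn M
  rw [Fintype.card_fin] at hbound
  have hlt : ((M : ℝ) + 1) * M / 2 * ziminBound q n * (q : ℝ) ^ M < (q : ℝ) ^ M := by
    rw [ziminBound, ← mul_assoc]
    exact mul_lt_of_lt_one_left (by positivity) h
  obtain ⟨W, rfl, hW⟩ := exists_avoids_of_numInstanceOccurrences_lt (α := Fin q) (zimin_ne_nil hn)
    (by rw [Fintype.card_fin]; exact_mod_cast hbound.trans_lt hlt)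
  exact ⟨⟨W, rfl, hW⟩, lt_zimf_of_avoids hW⟩

/-- First moment method: if `(M+1)M/2 · (q/(q−1))^{n−1} · q^{−2ⁿ+n+1} < 1`, then there
exists a `q`-ary word of length `M` that avoids `Zₙ`; consequently `f(n,q) > M`. -/
theorem exists_avoiding_word (n q M : ℕ) (hn : 1 ≤ n) (hq : 2 ≤ q) (hM : 1 ≤ M)
    (h : ((M : ℝ) + 1) * (M : ℝ) / 2 *
        ((q : ℝ) / ((q : ℝ) - 1)) ^ (n - 1) * (q : ℝ) ^ (-(2 ^ n : ℤ) + n + 1) < 1) :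
    (∃ W : List (Fin q), W.length = M ∧ Avoids W (Zimin n)) ∧ M < zimf n q :=
  exists_avoiding_word_general n q M hn hq h
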